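/- Let φ = φ₁ + iφ₂ : [0,L] → ℂ be a nonzero solution of φ' + φ''' = i(2π/p)φ with φ(0) = φ(L) = φ'(0) = φ'(L) = 0, where p > 0. If y ∈ H³(0,L) satisfies −y''' − y' = f with y(0) = y(L) = y'(L) = 0 and ∫₀^L f φ dx = 0, then ∫₀^L y φ dx = 0. -/

import Mathlib

/-- If `φ` is a nonzero solution of `φ' + φ''' = i(2π/p)φ` on `[0,L]` with
`φ(0) = φ(L) = φ'(0) = φ'(L) = 0`, and `y` solves `−y''' − y' = f` with
`y(0) = y(L) = y'(L) = 0` and `∫₀^L f φ = 0`, then `∫₀^L y φ = 0`. -/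
theorem elliptic_preserves_H (L p : ℝ) (hL : 0 < L) (hp : 0 < p)
    (φ φ' φ'' φ''' : ℝ → ℂ)
    (hφ1 : ∀ x ∈ Set.Icc (0:ℝ) L, HasDerivAt φ (φ' x) x)
    (hφ2 : ∀ x ∈ Set.Icc (0:ℝ) L, HasDerivAt φ' (φ'' x) x)
    (hφ3 : ∀ x ∈ Set.Icc (0:ℝ) L, HasDerivAt φ'' (φ''' x) x)
    (hφc : ContinuousOn φ''' (Set.Icc (0:ℝ) L))
    (hφne : ∃ x ∈ Set.Icc (0:ℝ) L, φ x ≠ 0)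
    (hode : ∀ x ∈ Set.Icc (0:ℝ) L,
      φ' x + φ''' x = Complex.I * (2*Real.pi/p) * φ x)
    (hφ0 : φ 0 = 0) (hφL : φ L = 0) (hφ'0 : φ' 0 = 0) (hφ'L : φ' L = 0)
    (y y' y'' y''' f : ℝ → ℝ)
    (hy1 : ∀ x ∈ Set.Icc (0:ℝ) L, HasDerivAt y (y' x) x)
    (hy2 : ∀ x ∈ Set.Icc (0:ℝ) L, HasDerivAt y' (y'' x) x)
    (hy3 : ∀ x ∈ Set.Icc (0:ℝ) L, HasDerivAt y'' (y''' x) x)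
    (hyc : ContinuousOn y''' (Set.Icc (0:ℝ) L))
    (heq : ∀ x ∈ Set.Icc (0:ℝ) L, -(y''' x) - y' x = f x)
    (hy0 : y 0 = 0) (hyL : y L = 0) (hy'L : y' L = 0)
    (hfφ : ∫ x in (0:ℝ)..L, (f x : ℂ) * φ x = 0) :
    ∫ x in (0:ℝ)..L, (y x : ℂ) * φ x = 0 := by
  have h0L : (0:ℝ) ≤ L := hL.le
  have huIcc : Set.uIcc (0:ℝ) L = Set.Icc 0 L := Set.uIcc_of_le h0L
  have cφ : ContinuousOn φ (Set.Icc 0 L) := fun x hx => (hφ1 x hx).continuousAt.continuousWithinAt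
  have cφ' : ContinuousOn φ' (Set.Icc 0 L) := fun x hx => (hφ2 x hx).continuousAt.continuousWithinAt
  have cφ'' : ContinuousOn φ'' (Set.Icc 0 L) := fun x hx => (hφ3 x hx).continuousAt.continuousWithinAt
  have cy : ContinuousOn (fun x => (y x : ℂ)) (Set.Icc 0 L) :=
    Complex.continuous_ofReal.comp_continuousOn
      (fun x hx => (hy1 x hx).continuousAt.continuousWithinAt)
  have cy' : ContinuousOn (fun x => (y' x : ℂ)) (Set.Icc 0 L) :=
    Complex.continuous_ofReal.comp_continuousOn
      (fun x hx => (hy2 x hx).continuousAt.continuousWithinAt)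
  have cy'' : ContinuousOn (fun x => (y'' x : ℂ)) (Set.Icc 0 L) :=
    Complex.continuous_ofReal.comp_continuousOn
      (fun x hx => (hy3 x hx).continuousAt.continuousWithinAt)
  have cy''' : ContinuousOn (fun x => (y''' x : ℂ)) (Set.Icc 0 L) :=
    Complex.continuous_ofReal.comp_continuousOn hyc
  set g : ℝ → ℂ := fun x => -(↑(y'' x)) * φ x + ↑(y' x) * φ' x - ↑(y x) * φ'' x - ↑(y x) * φ x
    with hg
  have hgderiv : ∀ x ∈ Set.Icc (0:ℝ) L,
      HasDerivAt g ((-(↑(y''' x)) - ↑(y' x)) * φ x - ↑(y x) * (φ''' x + φ' x)) x := by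
    intro x hx
    have d1 : HasDerivAt (fun t => (y t : ℂ)) (↑(y' x)) x := (hy1 x hx).ofReal_comp
    have d2 : HasDerivAt (fun t => (y' t : ℂ)) (↑(y'' x)) x := (hy2 x hx).ofReal_comp
    have d3 : HasDerivAt (fun t => (y'' t : ℂ)) (↑(y''' x)) x := (hy3 x hx).ofReal_comp
    have := (((d3.neg.mul (hφ1 x hx)).add (d2.mul (hφ2 x hx))).sub
      (d1.mul (hφ3 x hx))).sub (d1.mul (hφ1 x hx))
    convert this using 1
    · rfl
    · rfl
    · simp only [Pi.neg_apply]
      ring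
  have hcont : ContinuousOn (fun x => (-(↑(y''' x)) - ↑(y' x)) * φ x - ↑(y x) * (φ''' x + φ' x))
      (Set.Icc (0:ℝ) L) :=
    ((cy'''.neg.sub cy').mul cφ).sub (cy.mul (hφc.add cφ'))
  have hint : IntervalIntegrable
      (fun x => (-(↑(y''' x)) - ↑(y' x)) * φ x - ↑(y x) * (φ''' x + φ' x))
      MeasureTheory.volume 0 L := (hcont.mono huIcc.subset).intervalIntegrable
  have hFTC : (∫ x in (0:ℝ)..L,
      ((-(↑(y''' x)) - ↑(y' x)) * φ x - ↑(y x) * (φ''' x + φ' x))) = g L - g 0 := by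
    refine intervalIntegral.integral_eq_sub_of_hasDerivAt (fun x hx => ?_) hint
    exact hgderiv x (huIcc ▸ hx)
  have hbd : g L - g 0 = 0 := by
    simp [hg, hφ0, hφL, hφ'0, hφ'L, hy0, hyL]
  have hint1 : IntervalIntegrable (fun x => (-(↑(y''' x)) - ↑(y' x)) * φ x)
      MeasureTheory.volume 0 L :=
    ((((cy'''.neg.sub cy').mul cφ)).mono huIcc.subset).intervalIntegrable
  have hint2 : IntervalIntegrable (fun x => (↑(y x) : ℂ) * (φ''' x + φ' x))
      MeasureTheory.volume 0 L :=
    (((cy.mul (hφc.add cφ'))).mono huIcc.subset).intervalIntegrable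
  have hsplit : (∫ x in (0:ℝ)..L, ((-(↑(y''' x)) - ↑(y' x)) * φ x - ↑(y x) * (φ''' x + φ' x)))
      = (∫ x in (0:ℝ)..L, (-(↑(y''' x)) - ↑(y' x)) * φ x)
        - ∫ x in (0:ℝ)..L, (↑(y x) : ℂ) * (φ''' x + φ' x) :=
    intervalIntegral.integral_sub hint1 hint2
  have hI1 : (∫ x in (0:ℝ)..L, (-(↑(y''' x)) - ↑(y' x)) * φ x) = 0 := by
    rw [← hfφ]
    refine intervalIntegral.integral_congr ?_
    intro x hx
    have hx' := huIcc ▸ hx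
    have := heq x hx'
    simp only
    rw [← this]
    push_cast
    ring
  have hI2 : (∫ x in (0:ℝ)..L, (↑(y x) : ℂ) * (φ''' x + φ' x))
      = Complex.I * (2*Real.pi/p) * ∫ x in (0:ℝ)..L, (y x : ℂ) * φ x := by
    rw [← intervalIntegral.integral_const_mul]
    refine intervalIntegral.integral_congr ?_
    intro x hx
    have hx' := huIcc ▸ hx
    have h := hode x hx'
    simp only
    rw [add_comm (φ''' x) (φ' x), h]
    ring
  have hzero : Complex.I * (2*Real.pi/p) * (∫ x in (0:ℝ)..L, (y x : ℂ) * φ x) = 0 := by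
    have h := hFTC
    rw [hsplit, hI1, hI2, hbd] at h
    linear_combination -h
  have hcne : (Complex.I * (2*Real.pi/p) : ℂ) ≠ 0 := by
    refine mul_ne_zero Complex.I_ne_zero ?_
    have h2 : (2*Real.pi/p : ℝ) ≠ 0 := by positivity
    exact_mod_cast h2
  exact (mul_eq_zero.mp hzero).resolve_left hcne
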